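/- arXiv:0907.0787 — 4 statements merged into one kernel-verified Lean document; each statement's English description precedes it below -/
import Mathlib

section
/- A group acting on a nonempty finite tree (a finite connected acyclic graph) by graph automorphisms without inversions fixes a vertex or a geometric edge; consequently, a finite group acting without inversions on a tree fixes a vertex. -/
/-!
Pruning the leaves of a finite invariant subtree leaves a smaller invariant subtree, which is
empty only when the subtree is a single vertex or an edge; without inversions, an invariant edge
has both ends fixed. A finite group preserves the finite subtree spanned by an orbit.
-/

open SimpleGraph

namespace SimpleGraph

variable {V : Type*} {T : SimpleGraph V}

theorem IsAcyclic.support_subset_support_of_isPath (hT : T.IsAcyclic) {a b : V}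
    {p : T.Walk a b} (hp : p.IsPath) (w : T.Walk a b) : p.support ⊆ w.support := by
  classical
  have : p = w.bypass := congrArg Subtype.val <|
    (hT.subsingleton_path a b).elim ⟨p, hp⟩ ⟨w.bypass, w.bypass_isPath⟩
  exact this ▸ w.support_bypass_subset_support

theorem IsTree.eq_of_adj_of_dist_eq_add_one (hT : T.IsTree) {u a x y : V}
    (hx : T.Adj x a) (hy : T.Adj y a) (hxd : T.dist u a = T.dist u x + 1)
    (hyd : T.dist u a = T.dist u y + 1) : x = y := by
  obtain ⟨p, -, hp⟩ := hT.connected.exists_path_of_dist u x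
  obtain ⟨q, -, hq⟩ := hT.connected.exists_path_of_dist u y
  have hpa : (p.concat hx).IsPath :=
    (p.concat hx).isPath_of_length_eq_dist (by rw [Walk.length_concat, hp, hxd])
  have hqa : (q.concat hy).IsPath :=
    (q.concat hy).isPath_of_length_eq_dist (by rw [Walk.length_concat, hq, hyd])
  have heq : p.concat hx = q.concat hy := congrArg Subtype.val <|
    (hT.isAcyclic.subsingleton_path u a).elim ⟨_, hpa⟩ ⟨_, hqa⟩
  simpa using congrArg Walk.penultimate heq

theorem Walk.IsPath.exists_adj_ne_of_mem_support {u v x : V} {p : T.Walk u v} (hp : p.IsPath)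
    (hx : x ∈ p.support) (hxu : x ≠ u) (hxv : x ≠ v) :
    ∃ y ∈ p.support, ∃ z ∈ p.support, y ≠ z ∧ T.Adj x y ∧ T.Adj x z := by
  classical
  obtain ⟨y, hy, _, hpre⟩ := Walk.exists_eq_cons_of_ne hxu (p.takeUntil x hx).reverse
  obtain ⟨z, hz, _, hsuf⟩ := Walk.exists_eq_cons_of_ne hxv (p.dropUntil x hx)
  have hy_mem : y ∈ (p.takeUntil x hx).support := by
    simpa using congrArg (y ∈ Walk.support ·) hpre
  have hz_mem : z ∈ (p.dropUntil x hx).support.tail := by simp [hsuf]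
  have hnodup := hp.support_nodup
  rw [← p.take_spec hx, Walk.support_append] at hnodup
  have hdisj := List.disjoint_of_nodup_append hnodup
  exact ⟨y, p.support_takeUntil_subset_support hx hy_mem,
    z, p.support_dropUntil_subset_support hx (List.tail_subset _ hz_mem),
    fun h => hdisj hy_mem (h ▸ hz_mem), hy, hz⟩

/-- In a tree, these are the vertex sets of subtrees. -/
def IsPathConvex (T : SimpleGraph V) (S : Set V) : Prop :=
  ∀ ⦃a b : V⦄, a ∈ S → b ∈ S → ∀ p : T.Walk a b, p.IsPath → ∀ x ∈ p.support, x ∈ S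

def pathHull (T : SimpleGraph V) (A : Set V) : Set V :=
  {x | ∃ a ∈ A, ∃ b ∈ A, ∃ p : T.Walk a b, p.IsPath ∧ x ∈ p.support}

def prune (T : SimpleGraph V) (S : Set V) : Set V :=
  {x ∈ S | ∃ y ∈ S, ∃ z ∈ S, y ≠ z ∧ T.Adj x y ∧ T.Adj x z}

theorem isPathConvex_univ : T.IsPathConvex Set.univ := fun _ _ _ _ _ _ _ _ => Set.mem_univ _

theorem subset_pathHull (A : Set V) : A ⊆ T.pathHull A :=
  fun a ha => ⟨a, ha, a, ha, .nil, Walk.IsPath.nil, Walk.start_mem_support _⟩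

theorem IsTree.isPathConvex_pathHull (hT : T.IsTree) (A : Set V) :
    T.IsPathConvex (T.pathHull A) := by
  classical
  rintro a b ⟨a₁, ha₁, a₂, ha₂, p, hp, ha⟩ ⟨b₁, hb₁, b₂, hb₂, q, hq, hb⟩ r hr x hx
  obtain ⟨s, hs, -⟩ := hT.connected.exists_path_of_dist a₂ b₁
  have hx' := hT.isAcyclic.support_subset_support_of_isPath hr
    ((p.dropUntil a ha).append (s.append (q.takeUntil b hb))) hx
  simp only [Walk.mem_support_append_iff] at hx'
  rcases hx' with hx' | hx' | hx'
  · exact ⟨a₁, ha₁, a₂, ha₂, p, hp, p.support_dropUntil_subset_support ha hx'⟩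
  · exact ⟨a₂, ha₂, b₁, hb₁, s, hs, hx'⟩
  · exact ⟨b₁, hb₁, b₂, hb₂, q, hq, q.support_takeUntil_subset_support hb hx'⟩

theorem IsTree.finite_pathHull (hT : T.IsTree) {A : Set V} (hA : A.Finite) :
    (T.pathHull A).Finite := by
  refine ((hA.biUnion fun a _ => hA.biUnion fun b _ =>
    ((hT.connected a b).some.support.finite_toSet)).subset ?_)
  rintro x ⟨a, ha, b, hb, p, hp, hx⟩
  exact Set.mem_biUnion ha <| Set.mem_biUnion hb <|
    hT.isAcyclic.support_subset_support_of_isPath hp _ hx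

theorem prune_subset (S : Set V) : T.prune S ⊆ S := fun _ hx => hx.1

theorem IsPathConvex.prune {S : Set V} (hS : T.IsPathConvex S) : T.IsPathConvex (T.prune S) := by
  intro a b ha hb p hp x hx
  have hxS := hS ha.1 hb.1 p hp x hx
  by_cases hxa : x = a
  · exact hxa ▸ ha
  by_cases hxb : x = b
  · exact hxb ▸ hb
  obtain ⟨y, hy, z, hz, hyz, hxy, hxz⟩ := hp.exists_adj_ne_of_mem_support hx hxa hxb
  exact ⟨hxS, y, hS ha.1 hb.1 p hp y hy, z, hS ha.1 hb.1 p hp z hz, hyz, hxy, hxz⟩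

theorem IsTree.exists_mem_not_mem_prune (hT : T.IsTree) {S : Set V} (hfin : S.Finite)
    (hne : S.Nonempty) : ∃ a ∈ S, a ∉ T.prune S := by
  -- a vertex of `S` farthest from `u` has only its neighbour towards `u` in `S`
  obtain ⟨u, hu⟩ := hne
  obtain ⟨a, haS, hmax⟩ := S.exists_max_image (T.dist u) hfin ⟨u, hu⟩
  refine ⟨a, haS, fun ⟨_, y, hy, z, hz, hyz, hay, haz⟩ => hyz ?_⟩
  have hparent : ∀ x ∈ S, T.Adj a x → T.dist u a = T.dist u x + 1 := fun x hx hax =>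
    (hT.dist_eq_dist_add_one_of_adj u hax).resolve_right fun h => by
      have := hmax x hx
      omega
  exact hT.eq_of_adj_of_dist_eq_add_one hay.symm haz.symm (hparent y hy hay) (hparent z hz haz)

theorem IsTree.adj_of_prune_eq_empty (hT : T.IsTree) {S : Set V} (hS : T.IsPathConvex S)
    (hprune : T.prune S = ∅) {a b : V} (ha : a ∈ S) (hb : b ∈ S) (hab : a ≠ b) : T.Adj a b := by
  obtain ⟨p, hp, -⟩ := hT.connected.exists_path_of_dist a b
  obtain ⟨y, hay, q, rfl⟩ := Walk.exists_eq_cons_of_ne hab p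
  by_contra hnadj
  have hyb : y ≠ b := fun h => hnadj (h ▸ hay)
  have hy : y ∈ (Walk.cons hay q).support := by simp
  obtain ⟨z, hz, w, hw, hzw, hyz, hyw⟩ := hp.exists_adj_ne_of_mem_support hy hay.ne' hyb
  have : y ∈ T.prune S := ⟨hS ha hb _ hp y hy, z, hS ha hb _ hp z hz, w, hS ha hb _ hp w hw,
    hzw, hyz, hyw⟩
  simp [hprune] at this

theorem mapsTo_prune {f : T →g T} (hf : Function.Injective f) {S : Set V}
    (hS : Set.MapsTo f S S) : Set.MapsTo f (T.prune S) (T.prune S) :=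
  fun _ ⟨hx, y, hy, z, hz, hyz, hxy, hxz⟩ =>
    ⟨hS hx, f y, hS hy, f z, hS hz, hf.ne hyz, f.map_adj hxy, f.map_adj hxz⟩

theorem mapsTo_pathHull {f : T →g T} (hf : Function.Injective f) {A : Set V}
    (hA : Set.MapsTo f A A) : Set.MapsTo f (T.pathHull A) (T.pathHull A) := by
  rintro x ⟨a, ha, b, hb, p, hp, hx⟩
  exact ⟨f a, hA ha, f b, hA hb, p.map f, hp.map hf, Walk.support_map f p ▸ List.mem_map_of_mem hx⟩

section Action

variable {Γ : Type*} [Group Γ] [MulAction Γ V]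

def smulHom (hadj : ∀ (g : Γ) (v w : V), T.Adj v w → T.Adj (g • v) (g • w)) (g : Γ) : T →g T :=
  ⟨(g • ·), hadj g _ _⟩

theorem IsTree.exists_fixed_of_prune_eq_empty (hT : T.IsTree)
    (hni : ∀ (g : Γ) (v w : V), T.Adj v w → ¬(g • v = w ∧ g • w = v))
    {S : Set V} (hne : S.Nonempty) (hinv : ∀ g : Γ, Set.MapsTo (g • ·) S S)
    (hS : T.IsPathConvex S) (hprune : T.prune S = ∅) : ∃ v ∈ S, ∀ g : Γ, g • v = v := by
  obtain ⟨a, ha⟩ := hne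
  refine ⟨a, ha, fun g => ?_⟩
  by_contra hga
  have hb : g • a ∈ S := hinv g ha
  have hc : g • g • a ∈ S := hinv g hb
  have hab : T.Adj a (g • a) := hT.adj_of_prune_eq_empty hS hprune ha hb (Ne.symm hga)
  have hbc : g • a ≠ g • g • a := fun h => hga (MulAction.injective g h).symm
  have hac : a ≠ g • g • a := fun h => hni g a (g • a) hab ⟨rfl, h.symm⟩
  have : g • a ∈ T.prune S := ⟨hb, a, ha, g • g • a, hc, hac, hab.symm,
    hT.adj_of_prune_eq_empty hS hprune hb hc hbc⟩
  simp [hprune] at this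

theorem IsTree.exists_fixed_of_isPathConvex (hT : T.IsTree)
    (hadj : ∀ (g : Γ) (v w : V), T.Adj v w → T.Adj (g • v) (g • w))
    (hni : ∀ (g : Γ) (v w : V), T.Adj v w → ¬(g • v = w ∧ g • w = v))
    {S : Set V} (hfin : S.Finite) (hne : S.Nonempty) (hinv : ∀ g : Γ, Set.MapsTo (g • ·) S S)
    (hS : T.IsPathConvex S) : ∃ v ∈ S, ∀ g : Γ, g • v = v := by
  induction hn : S.ncard using Nat.strong_induction_on generalizing S with
  | _ n ih =>
  rcases (T.prune S).eq_empty_or_nonempty with hprune | hprune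
  · exact hT.exists_fixed_of_prune_eq_empty hni hne hinv hS hprune
  obtain ⟨a, ha, hna⟩ := hT.exists_mem_not_mem_prune hfin hne
  have hlt : (T.prune S).ncard < n :=
    hn ▸ Set.ncard_lt_ncard ⟨prune_subset S, fun h => hna (h ha)⟩ hfin
  obtain ⟨v, hv, hfix⟩ := ih _ hlt (hfin.subset (prune_subset S)) hprune
    (fun g => mapsTo_prune (f := smulHom hadj g) (MulAction.injective g) (hinv g)) hS.prune rfl
  exact ⟨v, prune_subset S hv, hfix⟩

end Action

end SimpleGraph

/-- A group acting without inversions on a nonempty finite tree fixes a vertex or a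
geometric edge (pointwise, by absence of inversions); consequently, a finite group
acting without inversions on any tree fixes a vertex. -/
theorem stmt_2 {V Γ : Type*} [Group Γ] [MulAction Γ V]
    (T : SimpleGraph V) (hT : T.IsTree)
    (hadj : ∀ (g : Γ) (v w : V), T.Adj v w → T.Adj (g • v) (g • w))
    (hni : ∀ (g : Γ) (v w : V), T.Adj v w → ¬(g • v = w ∧ g • w = v)) :
    ((Nonempty V ∧ Finite V) →
        ((∃ v : V, ∀ g : Γ, g • v = v) ∨
          ∃ v w : V, T.Adj v w ∧ ∀ g : Γ, g • v = v ∧ g • w = w)) ∧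
      (Finite Γ → ∃ v : V, ∀ g : Γ, g • v = v) := by
  refine ⟨fun ⟨_, _⟩ => Or.inl ?_, fun hΓ => ?_⟩
  · obtain ⟨v, -, hv⟩ := hT.exists_fixed_of_isPathConvex hadj hni Set.finite_univ
      Set.univ_nonempty (fun g => Set.mapsTo_univ _ _) isPathConvex_univ
    exact ⟨v, hv⟩
  · obtain ⟨v₀⟩ := hT.connected.nonempty
    set A := MulAction.orbit Γ v₀
    have hA : ∀ g : Γ, Set.MapsTo (g • ·) A A := fun g _ => MulAction.mem_orbit_of_mem_orbit g
    obtain ⟨v, -, hv⟩ := hT.exists_fixed_of_isPathConvex hadj hni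
      (hT.finite_pathHull (Set.finite_range (· • v₀)))
      ⟨v₀, subset_pathHull A (MulAction.mem_orbit_self v₀)⟩
      (fun g => mapsTo_pathHull (f := smulHom hadj g) (MulAction.injective g) (hA g))
      (hT.isPathConvex_pathHull A)
    exact ⟨v, hv⟩
end

section
/- (Ping Pong Lemma for amalgamated products) Let a group G act on a set X, let H₁, H₂ ≤ G be subgroups with N = H₁ ∩ H₂, [H₁ : N] ≥ 3 and [H₂ : N] ≥ 2, and let X₁, X₂ ⊆ X be nonempty with X₂ ⊄ X₁, such that h·X₂ ⊆ X₁ for all h ∈ H₁ \ N and h·X₁ ⊆ X₂ for all h ∈ H₂ \ N. Then the canonical homomorphism from the amalgamated free product H₁ *_N H₂ to G (induced by the inclusions) is injective; equivalently, the subgroup generated by H₁ and H₂ is isomorphic to H₁ *_N H₂. -/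
/-!
Write an element of `H₁ *_N H₂` in normal form `n g₁ ⋯ gₖ`, the letters `gᵢ` lying alternately
in `H₁ \ N` and `H₂ \ N`. Absorbing `n` into `g₁`, its image in `G` is an alternating product.
An alternating product that starts and ends in `H₁` maps a point of `X₂ \ X₁` into `X₁`, so it
is not `1`. Any other alternating product becomes one of this shape after inverting and
conjugating by a suitable `k ∈ H₁ \ N`; such a `k` exists because `[H₁ : N] ≥ 3`.
-/

/-- The `Bool`-indexed family `{H₁, H₂}` of subgroups, used to form the amalgamated
free product `H₁ *_N H₂` as a pushout. -/
def pingFam {G : Type*} [Group G] (H₁ H₂ : Subgroup G) : Bool → Type _ :=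
  fun b => bif b then ↥H₁ else ↥H₂

instance {G : Type*} [Group G] (H₁ H₂ : Subgroup G) : ∀ b, Group (pingFam H₁ H₂ b)
  | true => inferInstanceAs (Group ↥H₁)
  | false => inferInstanceAs (Group ↥H₂)

/-- The inclusions of the common subgroup `N` into `H₁` and `H₂`. -/
def pingMaps {G : Type*} [Group G] (H₁ H₂ N : Subgroup G)
    (hle1 : N ≤ H₁) (hle2 : N ≤ H₂) : ∀ b, ↥N →* pingFam H₁ H₂ b
  | true => Subgroup.inclusion hle1
  | false => Subgroup.inclusion hle2

/-- The inclusions of `H₁` and `H₂` into `G`. -/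
def pingSub {G : Type*} [Group G] (H₁ H₂ : Subgroup G) : ∀ b, pingFam H₁ H₂ b →* G
  | true => H₁.subtype
  | false => H₂.subtype

section

variable {G : Type*} [Group G]

theorem exists_ne_ne_of_natCard_eq_zero_or_three_le {α : Type*}
    (h : Nat.card α = 0 ∨ 3 ≤ Nat.card α) (x y : α) : ∃ z, z ≠ x ∧ z ≠ y := by
  refine Cardinal.exists_ne_ne_of_three_le ?_ x y
  rcases finite_or_infinite α with hα | hα
  · have hcard : 3 ≤ Nat.card α := h.resolve_left (Nat.card_pos_iff.2 ⟨⟨x⟩, hα⟩).ne'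
    rw [← Nat.cast_card]
    exact_mod_cast hcard
  · exact (Cardinal.natCast_lt_aleph0 (n := 3)).le.trans (Cardinal.aleph0_le_mk α)

theorem Subgroup.exists_notMem_and_inv_mul_notMem {N H : Subgroup G}
    (hidx : N.relIndex H = 0 ∨ 3 ≤ N.relIndex H) {a : G} (ha : a ∈ H) :
    ∃ k ∈ H, k ∉ N ∧ k⁻¹ * a ∉ N := by
  obtain ⟨q, hq1, hqa⟩ := exists_ne_ne_of_natCard_eq_zero_or_three_le
    (α := H ⧸ N.subgroupOf H) hidx (1 : H) (⟨a, ha⟩ : H)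
  obtain ⟨k, rfl⟩ := QuotientGroup.mk_surjective q
  refine ⟨k, k.2, fun hk => hq1 ?_, fun hk => hqa ?_⟩
  · rw [QuotientGroup.eq, mul_one, Subgroup.mem_subgroupOf]
    exact inv_mem hk
  · rw [QuotientGroup.eq]
    exact hk

inductive AltWord (K : Bool → Subgroup G) (N : Subgroup G) : Bool → Bool → List G → Prop
  | singleton {b : Bool} {h : G} : h ∈ K b → h ∉ N → AltWord K N b b [h]
  | cons {b c : Bool} {h : G} {l : List G} :
      h ∈ K b → h ∉ N → AltWord K N (!b) c l → AltWord K N b c (h :: l)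

namespace AltWord

variable {K : Bool → Subgroup G} {N : Subgroup G}

theorem append {b c d : Bool} {l₁ l₂ : List G} (w₁ : AltWord K N b c l₁)
    (w₂ : AltWord K N (!c) d l₂) : AltWord K N b d (l₁ ++ l₂) := by
  induction w₁ with
  | singleton hK hN => exact .cons hK hN w₂
  | cons hK hN _ ih => exact .cons hK hN (ih w₂)

theorem reverse_map_inv {b c : Bool} {l : List G} (w : AltWord K N b c l) :
    AltWord K N c b (l.map (·⁻¹)).reverse := by
  induction w with
  | @singleton b h hK hN => exact .singleton (inv_mem hK) (inv_mem_iff.not.2 hN)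
  | @cons b c h l hK hN _ ih =>
    have hh : AltWord K N (!!b) b [h⁻¹] := by
      simpa using .singleton (inv_mem hK) (inv_mem_iff.not.2 hN)
    simpa using ih.append hh

theorem mul_head {b c : Bool} {n h : G} {l : List G} (hNK : ∀ b, N ≤ K b) (hn : n ∈ N)
    (w : AltWord K N b c (h :: l)) : AltWord K N b c ((n * h) :: l) := by
  have hnh : n * h ∉ N := fun hnh => by
    cases w <;> simp_all [Subgroup.mul_mem_cancel_left]
  cases w with
  | singleton hK _ => exact .singleton (mul_mem (hNK b hn) hK) hnh
  | cons hK _ w => exact .cons (mul_mem (hNK b hn) hK) hnh w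

variable {X : Type*} [MulAction G X] {Y : Bool → Set X}

theorem prod_smul_mem (hping : ∀ b, ∀ h ∈ K b, h ∉ N → ∀ x ∈ Y (!b), h • x ∈ Y b)
    {b c : Bool} {l : List G} (w : AltWord K N b c l) :
    ∀ x ∈ Y (!c), l.prod • x ∈ Y b := by
  induction w with
  | singleton hK hN => simpa using hping _ _ hK hN
  | cons hK hN _ ih =>
    intro x hx
    rw [List.prod_cons, mul_smul]
    exact hping _ _ hK hN _ (by simpa using ih x hx)

theorem prod_ne_one_of_true_true (hping : ∀ b, ∀ h ∈ K b, h ∉ N → ∀ x ∈ Y (!b), h • x ∈ Y b)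
    (hY : ¬ Y false ⊆ Y true) {l : List G} (w : AltWord K N true true l) : l.prod ≠ 1 := by
  intro hl
  obtain ⟨x, hx, hxY⟩ := Set.not_subset.1 hY
  exact hxY (by simpa [hl] using w.prod_smul_mem hping x hx)

theorem prod_ne_one_of_true_false (hidx : N.relIndex (K true) = 0 ∨ 3 ≤ N.relIndex (K true))
    (hping : ∀ b, ∀ h ∈ K b, h ∉ N → ∀ x ∈ Y (!b), h • x ∈ Y b)
    (hY : ¬ Y false ⊆ Y true) {l : List G} (w : AltWord K N true false l) : l.prod ≠ 1 := by
  obtain _ | @⟨-, -, h, t, hK, -, w⟩ := w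
  obtain ⟨k, hk, hkN, hkh⟩ := Subgroup.exists_notMem_and_inv_mul_notMem hidx hK
  have hconj : AltWord K N true true ((k⁻¹ * h) :: (t ++ [k])) :=
    .cons (mul_mem (inv_mem hk) hK) hkh (w.append (.singleton hk hkN))
  intro hl
  refine prod_ne_one_of_true_true hping hY hconj ?_
  calc ((k⁻¹ * h) :: (t ++ [k])).prod = k⁻¹ * (h :: t).prod * k := by simp [mul_assoc]
    _ = 1 := by simp [hl]

theorem prod_ne_one_of_false_false (hidx : N.relIndex (K true) = 0 ∨ 3 ≤ N.relIndex (K true))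
    (hping : ∀ b, ∀ h ∈ K b, h ∉ N → ∀ x ∈ Y (!b), h • x ∈ Y b)
    (hY : ¬ Y false ⊆ Y true) {l : List G} (w : AltWord K N false false l) : l.prod ≠ 1 := by
  obtain ⟨k, hk, hkN, -⟩ := Subgroup.exists_notMem_and_inv_mul_notMem hidx (one_mem _)
  have hconj : AltWord K N true true (k :: (l ++ [k⁻¹])) :=
    .cons hk hkN (w.append (.singleton (inv_mem hk) (inv_mem_iff.not.2 hkN)))
  intro hl
  exact prod_ne_one_of_true_true hping hY hconj (by simp [hl])

theorem prod_ne_one (hidx : N.relIndex (K true) = 0 ∨ 3 ≤ N.relIndex (K true))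
    (hping : ∀ b, ∀ h ∈ K b, h ∉ N → ∀ x ∈ Y (!b), h • x ∈ Y b)
    (hY : ¬ Y false ⊆ Y true) : ∀ {b c : Bool} {l : List G}, AltWord K N b c l → l.prod ≠ 1
  | true, true, _, w => prod_ne_one_of_true_true hping hY w
  | true, false, _, w => prod_ne_one_of_true_false hidx hping hY w
  | false, true, _, w => by
    simpa [← List.prod_inv_reverse] using
      prod_ne_one_of_true_false hidx hping hY w.reverse_map_inv
  | false, false, _, w => prod_ne_one_of_false_false hidx hping hY w

end AltWord

namespace Monoid.PushoutI

variable {ι : Type*} {Gᵢ : ι → Type*} {H K : Type*} [∀ i, Group (Gᵢ i)] [Group H] [Monoid K]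
  {φ : ∀ i, H →* Gᵢ i}

theorem lift_prod_normalWord {d : NormalWord.Transversal φ} (f : ∀ i, Gᵢ i →* K) (k : H →* K)
    (hf : ∀ i, (f i).comp (φ i) = k) (w : NormalWord d) :
    lift f k hf w.prod = k w.head * (w.toList.map fun p => f p.1 p.2).prod := by
  simp [NormalWord.prod, CoprodI.Word.prod, map_list_prod, Function.comp_def]

theorem NormalWord.reduced {d : NormalWord.Transversal φ} (w : NormalWord d) :
    Reduced φ w.toWord := by
  rintro ⟨i, g⟩ hg hgφ
  have hgd : g ∈ d.set i := w.normalized i g hg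
  have h1 := ((d.compl i).coe_equiv_snd_eq_one_iff_mem (d.one_mem i)).2 hgφ
  rw [(d.compl i).equiv_snd_eq_self_of_mem_of_one_mem (one_mem _) hgd] at h1
  exact w.ne_one _ hg h1

end Monoid.PushoutI

variable {H₁ H₂ N : Subgroup G} {hle1 : N ≤ H₁} {hle2 : N ≤ H₂}

theorem pingSub_mem :
    ∀ {b : Bool} (x : pingFam H₁ H₂ b), pingSub H₁ H₂ b x ∈ (bif b then H₁ else H₂)
  | true, x => x.2
  | false, x => x.2

theorem pingSub_notMem_of_notMem_range :
    ∀ {b : Bool} {x : pingFam H₁ H₂ b}, x ∉ (pingMaps H₁ H₂ N hle1 hle2 b).range →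
      pingSub H₁ H₂ b x ∉ N
  | true, _, hx, hxN => hx ⟨⟨_, hxN⟩, rfl⟩
  | false, _, hx, hxN => hx ⟨⟨_, hxN⟩, rfl⟩

theorem exists_altWord_map_pingSub {p : Σ b, pingFam H₁ H₂ b} {l : List (Σ b, pingFam H₁ H₂ b)}
    (hl : ∀ q ∈ p :: l, q.2 ∉ (pingMaps H₁ H₂ N hle1 hle2 q.1).range)
    (hchain : (p :: l).IsChain fun q r => q.1 ≠ r.1) :
    ∃ c, AltWord (fun b => bif b then H₁ else H₂) N p.1 c
      ((p :: l).map fun q => pingSub H₁ H₂ q.1 q.2) := by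
  induction l generalizing p with
  | nil =>
    exact ⟨p.1, .singleton (pingSub_mem _) (pingSub_notMem_of_notMem_range (hl p (by simp)))⟩
  | cons r l ih =>
    obtain ⟨hpr, hchain⟩ := List.isChain_cons_cons.1 hchain
    obtain ⟨c, w⟩ := ih (fun q hq => hl q (List.mem_cons_of_mem _ hq)) hchain
    rw [Bool.eq_not.2 hpr.symm] at w
    exact ⟨c, .cons (pingSub_mem _) (pingSub_notMem_of_notMem_range (hl p (by simp))) w⟩

open Monoid.PushoutI in
theorem lift_pingSub_normalWord_prod_ne_one {X : Type*} [MulAction G X] {X₁ X₂ : Set X}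
    (hidx1 : N.relIndex H₁ = 0 ∨ 3 ≤ N.relIndex H₁) (hns : ¬ X₂ ⊆ X₁)
    (hp1 : ∀ h ∈ H₁, h ∉ N → ∀ x ∈ X₂, h • x ∈ X₁)
    (hp2 : ∀ h ∈ H₂, h ∉ N → ∀ x ∈ X₁, h • x ∈ X₂)
    {d : NormalWord.Transversal (pingMaps H₁ H₂ N hle1 hle2)} (w : NormalWord d)
    (hw : w.toList ≠ []) :
    lift (pingSub H₁ H₂) N.subtype (by rintro (_ | _) <;> rfl) w.prod ≠ 1 := by
  obtain ⟨p, l, hpl⟩ := List.exists_cons_of_ne_nil hw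
  obtain ⟨c, hc⟩ := exists_altWord_map_pingSub (fun q hq => w.reduced q (hpl ▸ hq))
    (hpl ▸ w.chain_ne)
  have hNK : ∀ b, N ≤ (bif b then H₁ else H₂) := by rintro (_ | _) <;> assumption
  have hping : ∀ b, ∀ h ∈ (bif b then H₁ else H₂), h ∉ N →
      ∀ x ∈ (bif !b then X₁ else X₂), h • x ∈ (bif b then X₁ else X₂) := by
    rintro (_ | _) <;> assumption
  rw [lift_prod_normalWord, hpl, List.map_cons, List.prod_cons, ← mul_assoc]
  exact AltWord.prod_ne_one (K := fun b => bif b then H₁ else H₂)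
    (Y := fun b => bif b then X₁ else X₂) hidx1 hping hns (hc.mul_head hNK w.head.2)

end

/-- (Ping Pong Lemma for amalgamated products.) If `G` acts on `X`, `H₁, H₂ ≤ G`,
`N = H₁ ∩ H₂` with `[H₁ : N] ≥ 3` and `[H₂ : N] ≥ 2`, and `X₁, X₂ ⊆ X` are nonempty
with `X₂ ⊄ X₁`, `(H₁ \ N)·X₂ ⊆ X₁` and `(H₂ \ N)·X₁ ⊆ X₂`, then the canonical
homomorphism `H₁ *_N H₂ → G` is injective. (Index `0` means infinite index.) -/
theorem stmt_4 {G X : Type*} [Group G] [MulAction G X]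
    (H₁ H₂ N : Subgroup G)
    (hle1 : N ≤ H₁) (hle2 : N ≤ H₂)
    (hidx1 : N.relIndex H₁ = 0 ∨ 3 ≤ N.relIndex H₁)
    (X₁ X₂ : Set X) (hns : ¬ X₂ ⊆ X₁)
    (hp1 : ∀ h ∈ H₁, h ∉ N → ∀ x ∈ X₂, h • x ∈ X₁)
    (hp2 : ∀ h ∈ H₂, h ∉ N → ∀ x ∈ X₁, h • x ∈ X₂) :
    Function.Injective
      (Monoid.PushoutI.lift (φ := pingMaps H₁ H₂ N hle1 hle2)
        (pingSub H₁ H₂) N.subtype (by intro b; cases b <;> rfl)) := by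
  classical
  obtain ⟨d⟩ := Monoid.PushoutI.NormalWord.transversal_nonempty (pingMaps H₁ H₂ N hle1 hle2)
    (by rintro (_ | _) <;> exact Subgroup.inclusion_injective ‹_›)
  refine (injective_iff_map_eq_one _).2 fun g hg => ?_
  obtain ⟨w, rfl⟩ : ∃ w : Monoid.PushoutI.NormalWord d, w.prod = g := ⟨g • .empty, by simp⟩
  by_cases hw : w.toList = []
  · have hhead : w.head = 1 :=
      Subtype.ext (by simpa [Monoid.PushoutI.lift_prod_normalWord, hw] using hg)
    rw [Monoid.PushoutI.NormalWord.ext (w₂ := .empty) hhead hw,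
      Monoid.PushoutI.NormalWord.prod_empty]
  · exact absurd hg (lift_pingSub_normalWord_prod_ne_one hidx1 hns hp1 hp2 w hw)
end

section
/- Let 𝒜 = (Q, Σ, δ, q₀, F) be a finite automaton. For an admissible subset P ⊆ Q (meaning q₀ ∈ P and P ∩ F ≠ ∅), define the automaton 𝒜_P whose states are pairs (p, R) with p ∈ P, R ⊆ P, q₀ ∈ R, transitions ((p,R), a, (q, R ∪ {q})) for each transition (p,a,q) of 𝒜 with p,q ∈ P, initial state (q₀,{q₀}), and final states {(q,P) : q ∈ P ∩ F}. Then L(𝒜) = ⋃_{P admissible} L(𝒜_P); more precisely, a word w is accepted by 𝒜_P iff w is accepted by 𝒜 via a run visiting exactly the states of P. -/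
/-- `IsRun δ q w q'` holds iff the word `w` labels a path from state `q` to state `q'`
in the nondeterministic automaton with transition relation `δ`. -/
def IsRun {Q A : Type*} (δ : Q → A → Q → Prop) : Q → List A → Q → Prop
  | q, [], q' => q' = q
  | q, a :: w, q' => ∃ p, δ q a p ∧ IsRun δ p w q'

/-- `RunVisits δ q w q' S` holds iff the word `w` labels a path from `q` to `q'` whose
set of visited states is exactly `S`. -/
def RunVisits {Q A : Type*} (δ : Q → A → Q → Prop) : Q → List A → Q → Set Q → Prop
  | q, [], q', S => q' = q ∧ S = {q}
  | q, a :: w, q', S => ∃ p S', δ q a p ∧ RunVisits δ p w q' S' ∧ S = insert q S'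

lemma rv_start {Q A : Type*} {δ : Q → A → Q → Prop} :
    ∀ {w : List A} {q q' : Q} {S : Set Q}, RunVisits δ q w q' S → q ∈ S
  | [], q, q', S, ⟨_, hS⟩ => hS ▸ rfl
  | a :: w, q, q', S, ⟨p, S', _, _, hS⟩ => hS ▸ Set.mem_insert _ _

lemma rv_sub {Q A : Type*} {δ : Q → A → Q → Prop} :
    ∀ {w : List A} {q q' : Q} {S : Set Q}, RunVisits δ q w q' S → q' ∈ S
  | [], q, q', S, ⟨hq, hS⟩ => by subst hq; exact hS ▸ rfl
  | a :: w, q, q', S, ⟨p, S', _, h, hS⟩ => hS ▸ Set.mem_insert_of_mem _ (rv_sub h)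

lemma isRun_iff_runVisits {Q A : Type*} {δ : Q → A → Q → Prop} :
    ∀ {w : List A} {q q' : Q}, IsRun δ q w q' ↔ ∃ S, RunVisits δ q w q' S := by
  intro w
  induction w with
  | nil => intro q q'; exact ⟨fun h => ⟨{q}, h, rfl⟩, fun ⟨S, h, _⟩ => h⟩
  | cons a w ih =>
    intro q q'
    constructor
    · rintro ⟨p, hp, hr⟩
      obtain ⟨S', hS'⟩ := ih.mp hr
      exact ⟨insert q S', p, S', hp, hS', rfl⟩
    · rintro ⟨S, p, S', hp, hr, rfl⟩
      exact ⟨p, hp, ih.mpr ⟨S', hr⟩⟩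

lemma prod_run_iff {Q A : Type*} {δ : Q → A → Q → Prop} {P : Set Q} :
    ∀ {w : List A} {q qf : Q} {R S : Set Q}, q ∈ P → q ∈ R →
    (IsRun (fun (s : Q × Set Q) (a : A) (s' : Q × Set Q) =>
        s.1 ∈ P ∧ s'.1 ∈ P ∧ δ s.1 a s'.1 ∧ s'.2 = s.2 ∪ {s'.1})
      (q, R) w (qf, S) ↔
    ∃ V, RunVisits δ q w qf V ∧ V ⊆ P ∧ S = R ∪ V) := by
  intro w
  induction w with
  | nil =>
    intro q qf R S hqP hqR
    constructor
    · intro h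
      have h' : qf = q ∧ S = R := by
        have : (qf, S) = (q, R) := h
        simpa [Prod.ext_iff] using this
      exact ⟨{q}, ⟨h'.1, rfl⟩, by simpa using hqP, by
        rw [h'.2, Set.union_eq_self_of_subset_right (Set.singleton_subset_iff.mpr hqR)]⟩
    · rintro ⟨V, ⟨rfl, rfl⟩, _, rfl⟩
      show (_, _) = (_, _)
      rw [Set.union_singleton, Set.insert_eq_of_mem hqR]
  | cons a w ih =>
    intro q qf R S hqP hqR
    constructor
    · rintro ⟨⟨p, R'⟩, ⟨_, hpP, hδ, hR'⟩, hrest⟩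
      simp only at hR'
      subst hR'
      obtain ⟨V', hV', hV'P, rfl⟩ := (ih hpP (by simp)).mp hrest
      refine ⟨insert q V', ⟨p, V', hδ, hV', rfl⟩, Set.insert_subset_iff.mpr ⟨hqP, hV'P⟩, ?_⟩
      have hpV' : p ∈ V' := rv_start hV'
      rw [Set.union_singleton, Set.insert_union,
        Set.insert_eq_of_mem (Set.mem_union_right _ hpV'), Set.union_insert,
        Set.insert_eq_of_mem (Set.mem_union_left _ hqR)]
    · rintro ⟨V, ⟨p, V', hδ, hV', rfl⟩, hVP, rfl⟩
      have hpP : p ∈ P := hVP (Set.mem_insert_of_mem _ (rv_start hV'))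
      refine ⟨(p, R ∪ {p}), ⟨hqP, hpP, hδ, rfl⟩, (ih hpP (by simp)).mpr
        ⟨V', hV', fun x hx => hVP (Set.mem_insert_of_mem _ hx), ?_⟩⟩
      have hpV' : p ∈ V' := rv_start hV'
      rw [Set.union_insert, Set.insert_eq_of_mem (Set.mem_union_left _ hqR),
        Set.union_singleton, Set.insert_union,
        Set.insert_eq_of_mem (Set.mem_union_right _ hpV')]

/-- For a finite automaton `𝒜 = (Q, A, δ, q₀, Fa)` and an admissible subset `P ⊆ Q`
(i.e. `q₀ ∈ P` and `P ∩ Fa ≠ ∅`), the automaton `𝒜_P` has states `(p, R)`,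
transitions `((p,R), a, (q, R ∪ {q}))` for transitions `(p,a,q)` of `𝒜` with
`p, q ∈ P`, initial state `(q₀, {q₀})` and final states `(q, P)` with `q ∈ P ∩ Fa`.
Then `L(𝒜) = ⋃_{P admissible} L(𝒜_P)`, and a word is accepted by `𝒜_P` iff it is
accepted by `𝒜` via a run visiting exactly the states of `P`. -/
theorem stmt_12 {Q A : Type*} [Fintype Q] [Fintype A]
    (δ : Q → A → Q → Prop) (q₀ : Q) (Fa : Set Q) (w : List A) :
    ((∃ qf ∈ Fa, IsRun δ q₀ w qf) ↔
      ∃ P : Set Q, (q₀ ∈ P ∧ (P ∩ Fa).Nonempty) ∧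
        ∃ qf, qf ∈ P ∧ qf ∈ Fa ∧
          IsRun (fun (s : Q × Set Q) (a : A) (s' : Q × Set Q) =>
              s.1 ∈ P ∧ s'.1 ∈ P ∧ δ s.1 a s'.1 ∧ s'.2 = s.2 ∪ {s'.1})
            (q₀, {q₀}) w (qf, P)) ∧
    ∀ P : Set Q, (q₀ ∈ P ∧ (P ∩ Fa).Nonempty) →
      ((∃ qf, qf ∈ P ∧ qf ∈ Fa ∧
          IsRun (fun (s : Q × Set Q) (a : A) (s' : Q × Set Q) =>
              s.1 ∈ P ∧ s'.1 ∈ P ∧ δ s.1 a s'.1 ∧ s'.2 = s.2 ∪ {s'.1})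
            (q₀, {q₀}) w (qf, P)) ↔
        ∃ qf, qf ∈ P ∧ qf ∈ Fa ∧ RunVisits δ q₀ w qf P) := by
  have key : ∀ P : Set Q, q₀ ∈ P →
      (∀ qf, (IsRun (fun (s : Q × Set Q) (a : A) (s' : Q × Set Q) =>
              s.1 ∈ P ∧ s'.1 ∈ P ∧ δ s.1 a s'.1 ∧ s'.2 = s.2 ∪ {s'.1})
            (q₀, {q₀}) w (qf, P) ↔ RunVisits δ q₀ w qf P)) := by
    intro P hq₀ qf
    refine Iff.trans (prod_run_iff hq₀ rfl) ?_
    constructor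
    · rintro ⟨V, hV, hVP, hP⟩
      have : P = V := by
        rw [hP, Set.union_eq_self_of_subset_left
          (Set.singleton_subset_iff.mpr (rv_start hV))]
      exact this ▸ hV
    · intro h
      exact ⟨P, h, le_refl _,
        (Set.union_eq_self_of_subset_left (Set.singleton_subset_iff.mpr hq₀)).symm⟩
  constructor
  · constructor
    · rintro ⟨qf, hqf, hrun⟩
      obtain ⟨S, hS⟩ := isRun_iff_runVisits.mp hrun
      exact ⟨S, ⟨rv_start hS, qf, rv_sub hS, hqf⟩, qf, rv_sub hS, hqf,
        (key S (rv_start hS) qf).mpr hS⟩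
    · rintro ⟨P, ⟨hq₀, _⟩, qf, _, hqfF, hrun⟩
      exact ⟨qf, hqfF, isRun_iff_runVisits.mpr ⟨P, (key P hq₀ qf).mp hrun⟩⟩
  · rintro P ⟨hq₀, _⟩
    constructor
    · rintro ⟨qf, h1, h2, h3⟩; exact ⟨qf, h1, h2, (key P hq₀ qf).mp h3⟩
    · rintro ⟨qf, h1, h2, h3⟩; exact ⟨qf, h1, h2, (key P hq₀ qf).mpr h3⟩
end

section
/- Let G be a group, H ≤ G a subgroup of finite index. If membership in every rational subset of G is decidable, then membership in every rational subset of H is decidable; conversely, if membership in every rational subset of H is decidable then the same holds for G. (Decidability of rational subset membership is a virtual property.) -/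
/-!
A rational subset of `H` is the image of a rational subset of `G` under the substitution sending
each generator of `H` to a word for it over the generators of `G`, and substitutions preserve
regularity. Conversely, fix a right transversal of `H`. Reading a word `u` over the generators of
`G`, a finite automaton tracks the coset `H π(u)` while a sequential transducer emits words for
the Schreier generators, which spell the `H`-part of `π(u)` (Reidemeister–Schreier rewriting).
So `π(u) = π(w)` iff `u` and `w` end in the same coset and their rewrites agree in `H`; since
transducers preserve regularity, membership in a rational subset of `G` reduces to finitely many
membership problems for rational subsets of `H`, selected by the coset of the input.
-/

open FreeMonoid

theorem DFA.isRegular_accepts {α σ : Type*} [Finite σ] (M : DFA α σ) : M.accepts.IsRegular :=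
  Language.isRegular_iff.2 ⟨σ, Fintype.ofFinite σ, M, rfl⟩

theorem NFA.isRegular_accepts {α σ : Type*} [Finite σ] (M : NFA α σ) : M.accepts.IsRegular :=
  M.toDFA_correct ▸ M.toDFA.isRegular_accepts

theorem εNFA.isRegular_accepts {α σ : Type*} [Finite σ] (M : εNFA α σ) :
    M.accepts.IsRegular :=
  M.toNFA_correct ▸ M.toNFA.isRegular_accepts

section Transducer

variable {Q C D : Type*} (act : Q → C → Q) (out : Q → C → List D)

def transduce : Q → List C → List D
  | _, [] => []
  | c, x :: u => out c x ++ transduce (act c x) u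

theorem transduce_const (d : C → List D) (u : List C) :
    transduce (fun _ _ => ()) (fun _ => d) () u = u.flatMap d := by
  induction u with
  | nil => rfl
  | cons x u ih => simp only [transduce, ih, List.flatMap_cons]

theorem foldl_eq_foldl_transduce (u : List C) (c : Q) (v : List D) :
    u.foldl (fun p x => (act p.1 x, p.2 ++ out p.1 x)) (c, v) =
      (u.foldl act c, v ++ transduce act out c u) := by
  induction u generalizing c v with
  | nil => simp [transduce]
  | cons x u ih => simp [transduce, ih]

theorem computable_foldl_transduce [Primcodable Q] [Primcodable C] [Primcodable D]
    [Finite Q] [Finite C] (c : Q) :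
    Computable fun u : List C => (u.foldl act c, transduce act out c u) := by
  have hstep : Primrec₂ fun (_ : List C) (px : (Q × List D) × C) =>
      (act px.1.1 px.2, px.1.2 ++ out px.1.1 px.2) := by
    have hx : Primrec fun px : (Q × List D) × C => (px.1.1, px.2) :=
      Primrec.pair (Primrec.fst.comp Primrec.fst) Primrec.snd
    exact (Primrec.pair ((Primrec.dom_finite fun y : Q × C => act y.1 y.2).comp hx)
      (Primrec.list_append.comp (Primrec.snd.comp Primrec.fst)
        ((Primrec.dom_finite fun y : Q × C => out y.1 y.2).comp hx))).comp Primrec.snd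
  refine (Primrec.list_foldl Primrec.id (Primrec.const (c, [])) hstep).to_comp.of_eq fun u => ?_
  simpa using foldl_eq_foldl_transduce act out u c []

theorem map_transduce_mul {M : Type*} [Monoid M] {f : FreeMonoid D →* M} {g : FreeMonoid C →* M}
    {rep : Q → M} (h : ∀ c x, f (ofList (out c x)) * rep (act c x) = rep c * g (of x))
    (c : Q) (u : List C) :
    f (ofList (transduce act out c u)) * rep (u.foldl act c) = rep c * g (ofList u) := by
  induction u generalizing c with
  | nil => simp [transduce]
  | cons x u ih =>
    rw [transduce, List.foldl_cons, ofList_append, map_mul, mul_assoc, ih, ← mul_assoc, h,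
      ofList_cons, map_mul, mul_assoc]

/-- `[]` is listed separately because `C` may be empty. -/
def transduceSuffixes : Set (List D) := {r | r = [] ∨ ∃ c x, r <:+ out c x}

instance [Finite Q] [Finite C] : Finite (transduceSuffixes out) := by
  refine Set.Finite.to_subtype (((Set.finite_iUnion fun c => Set.finite_iUnion fun x =>
    (out c x).tails.finite_toSet).insert []).subset ?_)
  rintro r (rfl | ⟨c, x, h⟩)
  · exact Set.mem_insert _ _
  · exact Set.mem_insert_of_mem _ (Set.mem_iUnion₂.2 ⟨c, x, (List.mem_tails _ _).2 h⟩)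

variable {σ : Type*} (M : DFA C σ) (c₀ : Q)

/-- Runs `M` and the transducer side by side; in the state `(s, c, r)` the word `r` still has to
be emitted before the next input letter is read by an `ε`-move. -/
def transduceεNFA : εNFA D (σ × Q × transduceSuffixes out) where
  step p
    | none => {p' | p.2.2.1 = [] ∧
        ∃ x, p'.1 = M.step p.1 x ∧ p'.2.1 = act p.2.1 x ∧ p'.2.2.1 = out p.2.1 x}
    | some b => {p' | p'.1 = p.1 ∧ p'.2.1 = p.2.1 ∧ p.2.2.1 = b :: p'.2.2.1}
  start := {p | p.1 = M.start ∧ p.2.1 = c₀ ∧ p.2.2.1 = []}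
  accept := {p | p.1 ∈ M.accept ∧ p.2.2.1 = []}

theorem transduceεNFA_isPath_sound {p p' : σ × Q × transduceSuffixes out}
    {x' : List (Option D)} (h : (transduceεNFA act out M c₀).IsPath p p' x')
    (hp' : p'.2.2.1 = []) :
    ∃ u, M.evalFrom p.1 u = p'.1 ∧ x'.reduceOption = p.2.2.1 ++ transduce act out p.2.1 u := by
  induction h with
  | nil p => exact ⟨[], rfl, by simp [hp', transduce]⟩
  | cons t p p' a x' hstep _ ih =>
    obtain ⟨u, hu, hx⟩ := ih hp'
    cases a with
    | none =>
      obtain ⟨hr, x, h₁, h₂, h₃⟩ := hstep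
      exact ⟨x :: u, by rwa [DFA.evalFrom_cons, ← h₁],
        by rw [List.reduceOption_cons_of_none, hx, h₂, h₃, hr]; rfl⟩
    | some b =>
      obtain ⟨h₁, h₂, h₃⟩ := hstep
      exact ⟨u, h₁ ▸ hu, by rw [List.reduceOption_cons_of_some, hx, h₃, h₂]; rfl⟩

theorem transduceεNFA_isPath_emit (s : σ) (c : Q) (r : List D)
    (hr : r ∈ transduceSuffixes out) :
    (transduceεNFA act out M c₀).IsPath (s, c, ⟨r, hr⟩) (s, c, ⟨[], Or.inl rfl⟩)
      (r.map some) := by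
  induction r with
  | nil => exact .nil _
  | cons b r ih =>
    have hr' : r ∈ transduceSuffixes out := by
      rcases hr with h | ⟨c, x, h⟩
      · exact absurd h (List.cons_ne_nil b r)
      · exact Or.inr ⟨c, x, (List.suffix_cons b r).trans h⟩
    exact .cons (s, c, ⟨r, hr'⟩) _ _ _ _ ⟨rfl, rfl, rfl⟩ (ih hr')

theorem transduceεNFA_isPath_complete (u : List C) (s : σ) (c : Q) (r : List D)
    (hr : r ∈ transduceSuffixes out) :
    ∃ x', x'.reduceOption = r ++ transduce act out c u ∧
      (transduceεNFA act out M c₀).IsPath (s, c, ⟨r, hr⟩)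
        (M.evalFrom s u, u.foldl act c, ⟨[], Or.inl rfl⟩) x' := by
  induction u generalizing s c r with
  | nil =>
    exact ⟨r.map some, by simp [List.reduceOption, transduce],
      transduceεNFA_isPath_emit act out M c₀ s c r hr⟩
  | cons x u ih =>
    obtain ⟨x', hx', hpath⟩ :=
      ih (M.step s x) (act c x) (out c x) (Or.inr ⟨c, x, List.suffix_refl _⟩)
    refine ⟨r.map some ++ none :: x', ?_, ?_⟩
    · simp [List.reduceOption, ← hx', transduce]
    exact (εNFA.isPath_append _).2 ⟨_, transduceεNFA_isPath_emit act out M c₀ s c r hr,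
      .cons _ _ _ _ _ ⟨rfl, x, rfl, rfl, rfl⟩ hpath⟩

theorem transduceεNFA_accepts :
    (transduceεNFA act out M c₀).accepts = transduce act out c₀ '' M.accepts := by
  ext v
  rw [εNFA.mem_accepts_iff_exists_path]
  constructor
  · rintro ⟨p, p', x', ⟨h₁, h₂, h₃⟩, ⟨hacc, hr⟩, rfl, hpath⟩
    obtain ⟨u, hu, hx⟩ := transduceεNFA_isPath_sound act out M c₀ hpath hr
    refine ⟨u, ?_, by rw [hx, h₂, h₃]; rfl⟩
    show M.evalFrom M.start u ∈ M.accept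
    rwa [← h₁, hu]
  · rintro ⟨u, hu, rfl⟩
    obtain ⟨x', hx', hpath⟩ :=
      transduceεNFA_isPath_complete act out M c₀ u M.start c₀ [] (Or.inl rfl)
    exact ⟨(M.start, c₀, ⟨[], Or.inl rfl⟩),
      (M.evalFrom M.start u, u.foldl act c₀, ⟨[], Or.inl rfl⟩),
      x', ⟨rfl, rfl, rfl⟩, ⟨hu, rfl⟩, hx', hpath⟩

end Transducer

theorem Language.IsRegular.image_transduce {Q C D : Type*} [Finite Q] [Finite C]
    {L : Language C} (hL : L.IsRegular) (act : Q → C → Q) (out : Q → C → List D)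
    (c₀ : Q) :
    Language.IsRegular (transduce act out c₀ '' L) := by
  obtain ⟨σ, _, M, rfl⟩ := hL
  rw [← transduceεNFA_accepts]
  exact εNFA.isRegular_accepts _

theorem Language.IsRegular.image_flatMap {C D : Type*} [Finite C] {L : Language C}
    (hL : L.IsRegular) (d : C → List D) : Language.IsRegular ((fun u => u.flatMap d) '' L) := by
  rw [← funext (transduce_const d)]
  exact hL.image_transduce _ _ ()

theorem ComputablePred.comp {α β : Type*} [Primcodable α] [Primcodable β] {p : β → Prop}
    (hp : ComputablePred p) {f : α → β} (hf : Computable f) :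
    ComputablePred fun a => p (f a) := by
  obtain ⟨_, hp⟩ := hp
  exact ⟨_, hp.comp hf⟩

theorem ComputablePred.uncurry_of_finite {Q α : Type*} [Primcodable Q] [Finite Q] [Primcodable α]
    {p : Q → α → Prop} (hp : ∀ c, ComputablePred (p c)) :
    ComputablePred fun x : Q × α => p x.1 x.2 := by
  classical
  have := Fintype.ofFinite Q
  suffices ∀ l : List Q, ∃ f : Q × α → Bool, Computable f ∧ ∀ x : Q × α, x.1 ∈ l →
      (f x ↔ p x.1 x.2) by
    obtain ⟨f, hf, hfp⟩ := this Finset.univ.toList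
    exact ComputablePred.computable_iff.2
      ⟨f, hf, funext fun x => propext (hfp x (by simp)).symm⟩
  intro l
  induction l with
  | nil => exact ⟨fun _ => false, Computable.const _, by simp⟩
  | cons c l ih =>
    obtain ⟨f, hf, hfp⟩ := ih
    refine ⟨fun x => bif decide (x.1 = c) then decide (p c x.2) else f x, ?_, ?_⟩
    · exact Computable.cond (Primrec.eq.comp Primrec.fst (Primrec.const c)).decide.to_comp
        ((hp c).decide.comp Computable.snd) hf
    · rintro ⟨c', a⟩ hc'
      by_cases h : c' = c
      · subst h; simp
      · simpa [h] using hfp (c', a) ((List.mem_cons.1 hc').resolve_left h)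

def RationalMembershipComputable {A M : Type*} [Primcodable A] [Monoid M]
    (π : FreeMonoid A →* M) : Prop :=
  ∀ L : Language A, L.IsRegular →
    ComputablePred fun w : List A =>
      π (FreeMonoid.ofList w) ∈ (fun u : List A => π (FreeMonoid.ofList u)) '' L

theorem rationalMembershipComputable_iff_forall_nfa {A M : Type*} [Primcodable A] [Monoid M]
    (π : FreeMonoid A →* M) :
    RationalMembershipComputable π ↔
      ∀ (σ : Type) (_ : Fintype σ) (N : NFA A σ),
        ComputablePred fun w : List A =>
          π (FreeMonoid.ofList w) ∈
            (fun u : List A => π (FreeMonoid.ofList u)) '' N.accepts := by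
  refine ⟨fun h σ _ N => h _ N.isRegular_accepts, fun h L hL => ?_⟩
  obtain ⟨σ, _, M, rfl⟩ := hL
  simpa only [DFA.toNFA_correct] using h σ inferInstance M.toNFA

theorem map_ofList_flatMap {A B M : Type*} [Monoid M] {f : FreeMonoid A →* M}
    {g : FreeMonoid B →* M} {d : B → List A} (hd : ∀ b, f (ofList (d b)) = g (of b))
    (w : List B) : f (ofList (w.flatMap d)) = g (ofList w) := by
  induction w with
  | nil => simp
  | cons b w ih => rw [List.flatMap_cons, ofList_append, map_mul, ih, hd, ofList_cons, map_mul]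

theorem RationalMembershipComputable.of_injective {A B M N : Type*} [Primcodable A]
    [Primcodable B] [Finite B] [Monoid M] [Monoid N] {πN : FreeMonoid A →* N}
    (hπN : Function.Surjective πN) {φ : M →* N} (hφ : Function.Injective φ)
    (πM : FreeMonoid B →* M) (h : RationalMembershipComputable πN) :
    RationalMembershipComputable πM := by
  intro L hL
  choose d hd using fun b => hπN (φ (πM (of b)))
  let d' : B → List A := fun b => (d b).toList
  have hmap := map_ofList_flatMap (f := πN) (g := φ.comp πM) (d := d') hd
  have hflat : Computable fun w : List B => w.flatMap d' :=
    (Primrec.list_flatMap Primrec.id ((Primrec.dom_finite d').comp Primrec.snd).to₂).to_comp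
  refine ((h _ (hL.image_flatMap d')).comp hflat).of_eq fun w => ⟨?_, ?_⟩
  · rintro ⟨_, ⟨v, hv, rfl⟩, he⟩
    exact ⟨v, hv, hφ (by simpa only [hmap, MonoidHom.comp_apply] using he)⟩
  · rintro ⟨v, hv, he⟩
    exact ⟨v.flatMap d', ⟨v, hv, rfl⟩, by simp only [hmap, MonoidHom.comp_apply, he]⟩

section Schreier

open QuotientGroup

variable {G A B : Type*} [Group G] (π : FreeMonoid A →* G) {Hs : Subgroup G}

noncomputable def cosetStep (c : Quotient (rightRel Hs)) (a : A) : Quotient (rightRel Hs) :=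
  Quotient.mk _ (c.out * π (of a))

theorem mul_inv_out_cosetStep_mem (c : Quotient (rightRel Hs)) (a : A) :
    c.out * π (of a) * (cosetStep π c a).out⁻¹ ∈ Hs :=
  rightRel_apply.1 (Quotient.mk_out (s := rightRel Hs) _)

theorem foldl_cosetStep (c : Quotient (rightRel Hs)) (u : List A) :
    u.foldl (cosetStep π) c = Quotient.mk _ (c.out * π (ofList u)) := by
  induction u generalizing c with
  | nil => simp
  | cons a u ih =>
    rw [List.foldl_cons, ih, ofList_cons, map_mul]
    refine Quotient.sound (rightRel_apply.2 ?_)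
    convert mul_inv_out_cosetStep_mem π c a using 1
    group

noncomputable def cosetDFA (c₀ t : Quotient (rightRel Hs)) : DFA A (Quotient (rightRel Hs)) :=
  ⟨cosetStep π, c₀, {t}⟩

theorem mem_cosetDFA_accepts {c₀ t : Quotient (rightRel Hs)} {u : List A} :
    u ∈ (cosetDFA π c₀ t).accepts ↔ u.foldl (cosetStep π) c₀ = t :=
  Iff.rfl

variable {πH : FreeMonoid B →* Hs} (hπH : Function.Surjective πH)

/-- A word over `B` for the Schreier generator `t_c π(a) t_{c a}⁻¹` of `Hs`, where the
transversal `t` is `Quotient.out`. -/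
noncomputable def schreierWord (c : Quotient (rightRel Hs)) (a : A) : List B :=
  (Function.surjInv hπH ⟨_, mul_inv_out_cosetStep_mem π c a⟩).toList

theorem schreierWord_spec (c : Quotient (rightRel Hs)) (a : A) :
    (πH (ofList (schreierWord π hπH c a)) : G) * (cosetStep π c a).out = c.out * π (of a) := by
  rw [schreierWord, ofList_toList, Function.surjInv_eq hπH]
  group

theorem coe_map_transduce_schreierWord_mul (c₀ : Quotient (rightRel Hs)) (u : List A) :
    (πH (ofList (transduce (cosetStep π) (schreierWord π hπH) c₀ u)) : G) *
      (u.foldl (cosetStep π) c₀).out = c₀.out * π (ofList u) :=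
  map_transduce_mul _ _ (f := Hs.subtype.comp πH) (schreierWord_spec π hπH) c₀ u

theorem map_eq_map_iff_schreier (c₀ : Quotient (rightRel Hs)) (u w : List A) :
    π (ofList u) = π (ofList w) ↔
      u.foldl (cosetStep π) c₀ = w.foldl (cosetStep π) c₀ ∧
        πH (ofList (transduce (cosetStep π) (schreierWord π hπH) c₀ u)) =
          πH (ofList (transduce (cosetStep π) (schreierWord π hπH) c₀ w)) := by
  have key := coe_map_transduce_schreierWord_mul π hπH c₀
  constructor
  · intro h
    have hend : u.foldl (cosetStep π) c₀ = w.foldl (cosetStep π) c₀ := by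
      rw [foldl_cosetStep, foldl_cosetStep, h]
    have hsplit := (key u).trans (h ▸ key w).symm
    rw [hend] at hsplit
    exact ⟨hend, Subtype.ext (mul_right_cancel hsplit)⟩
  · rintro ⟨hend, hT⟩
    refine mul_left_cancel ((key u).symm.trans ?_)
    rw [hend, hT, key w]

theorem map_mem_image_iff_schreier (c₀ : Quotient (rightRel Hs)) (L : Language A) (w : List A) :
    π (ofList w) ∈ (fun u : List A => π (ofList u)) '' L ↔
      πH (ofList (transduce (cosetStep π) (schreierWord π hπH) c₀ w)) ∈
        (fun v : List B => πH (ofList v)) ''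
          (transduce (cosetStep π) (schreierWord π hπH) c₀ ''
            (L ⊓ (cosetDFA π c₀ (w.foldl (cosetStep π) c₀)).accepts)) := by
  constructor
  · rintro ⟨u, hu, he⟩
    obtain ⟨hend, hT⟩ := (map_eq_map_iff_schreier π hπH c₀ u w).1 he
    exact ⟨_, ⟨u, ⟨hu, (mem_cosetDFA_accepts π).2 hend⟩, rfl⟩, hT⟩
  · rintro ⟨_, ⟨u, ⟨hu, hend⟩, rfl⟩, hT⟩
    exact ⟨u, hu, (map_eq_map_iff_schreier π hπH c₀ u w).2 ⟨hend, hT⟩⟩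

theorem RationalMembershipComputable.of_finiteIndex [Primcodable A] [Primcodable B] [Finite A]
    [Hs.FiniteIndex] (hπH : Function.Surjective πH) (h : RationalMembershipComputable πH) :
    RationalMembershipComputable π := by
  intro L hL
  have : Finite (Quotient (rightRel Hs)) :=
    Finite.of_equiv _ (quotientRightRelEquivQuotientLeftRel Hs).symm
  have := Fintype.ofFinite (Quotient (rightRel Hs))
  let _ : Primcodable (Quotient (rightRel Hs)) := Primcodable.ofEquiv _ (Fintype.equivFin _)
  let c₀ : Quotient (rightRel Hs) := Quotient.mk _ 1
  have hdec : ComputablePred fun p : Quotient (rightRel Hs) × List B =>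
      πH (ofList p.2) ∈ (fun v : List B => πH (ofList v)) ''
        (transduce (cosetStep π) (schreierWord π hπH) c₀ ''
          (L ⊓ (cosetDFA π c₀ p.1).accepts)) :=
    .uncurry_of_finite fun t =>
      h _ ((hL.inf (cosetDFA π c₀ t).isRegular_accepts).image_transduce _ _ c₀)
  exact (hdec.comp (computable_foldl_transduce _ _ c₀)).of_eq fun w =>
    (map_mem_image_iff_schreier π hπH c₀ L w).symm

end Schreier

/-- Decidability of rational subset membership is a virtual property: if `H` is a
finite-index subgroup of the finitely generated group `G` (with `π`, `πH` surjections
from free monoids on finite alphabets onto `G` resp. `H`), then membership in every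
rational subset of `G` is decidable iff membership in every rational subset of `H` is
decidable. -/
theorem stmt_13 {G : Type*} [Group G] {A B : Type*}
    [Fintype A] [Primcodable A] [Fintype B] [Primcodable B]
    (π : FreeMonoid A →* G) (hπ : Function.Surjective π)
    (Hs : Subgroup G) (hfi : Hs.FiniteIndex)
    (πH : FreeMonoid B →* Hs) (hπH : Function.Surjective πH) :
    ((∀ (σ : Type) (_ : Fintype σ) (M : NFA A σ),
        ComputablePred (fun w : List A =>
          π (FreeMonoid.ofList w) ∈
            (fun u : List A => π (FreeMonoid.ofList u)) '' M.accepts)) ↔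
      (∀ (σ : Type) (_ : Fintype σ) (M : NFA B σ),
        ComputablePred (fun w : List B =>
          πH (FreeMonoid.ofList w) ∈
            (fun u : List B => πH (FreeMonoid.ofList u)) '' M.accepts))) := by
  rw [← rationalMembershipComputable_iff_forall_nfa,
    ← rationalMembershipComputable_iff_forall_nfa]
  have := hfi
  exact ⟨.of_injective hπ Hs.subtype_injective πH, .of_finiteIndex π hπH⟩
end
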